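/- arXiv:2509.19662 — 11 statements merged into one kernel-verified Lean document; each statement's English description precedes it below -/
import Mathlib

section
/- Let n ≥ 1, let p_1 ≤ p_2 ≤ … ≤ p_n be positive reals, let α ∈ [0,1], and let β_1,…,β_n ∈ [0,1]. With M(i,j) = p_i + β_i·p_i if β_i·p_i ≤ β_j·p_j and M(i,j) = p_j + β_j·p_j otherwise (for i < j), it holds that Σ_{i=1}^n p_i + Σ_{1≤i<j≤n} M(i,j) ≤ (1+α)·Σ_{i=1}^n (n−i+1)·p_i + Σ_{i=1}^n (n−i)·(β_i − α)·p_i + Σ_{1≤i<j≤n} (p_j − p_i)·𝟙(β_j·p_j < β_i·p_i). -/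
open Finset in
/-- Total completion time bound of the signal-following algorithm
(Lemma: blindly following the signals). -/
theorem stmt_1 (n : ℕ) (hn : 1 ≤ n) (p β : ℕ → ℝ) (α : ℝ)
    (hα0 : 0 ≤ α) (hα1 : α ≤ 1)
    (hp : ∀ i ∈ Finset.Icc 1 n, 0 < p i)
    (hmono : ∀ i j, 1 ≤ i → i ≤ j → j ≤ n → p i ≤ p j)
    (hβ : ∀ i ∈ Finset.Icc 1 n, β i ∈ Set.Icc (0 : ℝ) 1) :
    (∑ i ∈ Finset.Icc 1 n, p i)
      + ∑ i ∈ Finset.Icc 1 n, ∑ j ∈ Finset.Icc (i + 1) n,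
          (if β i * p i ≤ β j * p j then p i + β i * p i else p j + β j * p j)
    ≤ (1 + α) * ∑ i ∈ Finset.Icc 1 n, ((n : ℝ) - i + 1) * p i
      + ∑ i ∈ Finset.Icc 1 n, ((n : ℝ) - i) * (β i - α) * p i
      + ∑ i ∈ Finset.Icc 1 n, ∑ j ∈ Finset.Icc (i + 1) n,
          (p j - p i) * (if β j * p j < β i * p i then 1 else 0) := by
  have hcard : ∀ i ∈ Finset.Icc 1 n, ((n : ℝ) - i) = ((Finset.Icc (i+1) n).card : ℝ) := by
    intro i hi
    simp only [Finset.mem_Icc] at hi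
    rw [Nat.card_Icc]
    have h : n + 1 - (i + 1) = n - i := by omega
    rw [h, Nat.cast_sub hi.2]
  have h1 : (1 + α) * ∑ i ∈ Finset.Icc 1 n, ((n : ℝ) - i + 1) * p i
      + ∑ i ∈ Finset.Icc 1 n, ((n : ℝ) - i) * (β i - α) * p i
      = (∑ i ∈ Finset.Icc 1 n, (p i + α * p i))
        + ∑ i ∈ Finset.Icc 1 n, ((n : ℝ) - i) * ((1 + β i) * p i) := by
    rw [Finset.mul_sum, ← Finset.sum_add_distrib, ← Finset.sum_add_distrib]
    exact Finset.sum_congr rfl fun i _ => by ring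
  have h2 : ∑ i ∈ Finset.Icc 1 n, ((n : ℝ) - i) * ((1 + β i) * p i)
      = ∑ i ∈ Finset.Icc 1 n, ∑ j ∈ Finset.Icc (i+1) n, (p i + β i * p i) := by
    refine Finset.sum_congr rfl fun i hi => ?_
    rw [Finset.sum_const, nsmul_eq_mul, ← hcard i hi]
    ring
  rw [h1, h2]
  have hαp : 0 ≤ ∑ i ∈ Finset.Icc 1 n, α * p i :=
    Finset.sum_nonneg fun i hi => mul_nonneg hα0 (hp i hi).le
  have hpair : ∑ i ∈ Finset.Icc 1 n, ∑ j ∈ Finset.Icc (i + 1) n,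
          (if β i * p i ≤ β j * p j then p i + β i * p i else p j + β j * p j)
      ≤ (∑ i ∈ Finset.Icc 1 n, ∑ j ∈ Finset.Icc (i+1) n, (p i + β i * p i))
        + ∑ i ∈ Finset.Icc 1 n, ∑ j ∈ Finset.Icc (i + 1) n,
          (p j - p i) * (if β j * p j < β i * p i then 1 else 0) := by
    rw [← Finset.sum_add_distrib]
    refine Finset.sum_le_sum fun i _ => ?_
    rw [← Finset.sum_add_distrib]
    refine Finset.sum_le_sum fun j _ => ?_
    by_cases h : β i * p i ≤ β j * p j
    · rw [if_pos h, if_neg (not_lt.2 h)]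
      simp
    · rw [if_neg h, if_pos (lt_of_not_ge h)]
      have := lt_of_not_ge h
      nlinarith
  rw [Finset.sum_add_distrib]
  linarith
end

section
/- Let α > 0, let p_i, p_j be reals with 0 < p_i ≤ p_j, and let β_i, β_j ∈ [0,1] satisfy β_j·p_j ≤ β_i·p_i. Then p_j − p_i ≤ (1/α)·|β_j − α|·p_j + (1/α)·|β_i − α|·p_i. -/
/-- Inverted pairs: the gap in processing times is bounded by the signal errors. -/
theorem stmt_2 (α pi pj βi βj : ℝ)
    (hα : 0 < α)
    (hpi : 0 < pi) (hpij : pi ≤ pj)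
    (hβi0 : 0 ≤ βi) (hβi1 : βi ≤ 1) (hβj0 : 0 ≤ βj) (hβj1 : βj ≤ 1)
    (hinv : βj * pj ≤ βi * pi) :
    pj - pi ≤ (1 / α) * |βj - α| * pj + (1 / α) * |βi - α| * pi := by
  have h1 : α - βj ≤ |βj - α| := by rw [abs_sub_comm]; exact le_abs_self _
  have h2 : βi - α ≤ |βi - α| := le_abs_self _
  rw [div_mul_eq_mul_div, div_mul_eq_mul_div, div_mul_eq_mul_div, div_mul_eq_mul_div,
    ← add_div, le_div_iff₀ hα]
  nlinarith [mul_le_mul_of_nonneg_right h1 (le_of_lt (lt_of_lt_of_le hpi hpij)),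
    mul_le_mul_of_nonneg_right h2 hpi.le]
end

section
/- Let n ≥ 1, let p_1 ≤ p_2 ≤ … ≤ p_n be positive reals, let α ∈ (0,1], and let β_1,…,β_n ∈ [0,1]. Then Σ_{1≤i<j≤n} (p_j − p_i)·𝟙(β_j·p_j < β_i·p_i) ≤ ((n−1)/α)·Σ_{i=1}^n |β_i − α|·p_i. -/
open Finset in
/-- The total inversion error is bounded by the ℓ₁ signal timing errors. -/
theorem stmt_3 (n : ℕ) (hn : 1 ≤ n) (p β : ℕ → ℝ) (α : ℝ)
    (hα0 : 0 < α) (hα1 : α ≤ 1)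
    (hp : ∀ i ∈ Finset.Icc 1 n, 0 < p i)
    (hmono : ∀ i j, 1 ≤ i → i ≤ j → j ≤ n → p i ≤ p j)
    (hβ : ∀ i ∈ Finset.Icc 1 n, β i ∈ Set.Icc (0 : ℝ) 1) :
    ∑ i ∈ Finset.Icc 1 n, ∑ j ∈ Finset.Icc (i + 1) n,
        (p j - p i) * (if β j * p j < β i * p i then 1 else 0)
      ≤ (((n : ℝ) - 1) / α) * ∑ i ∈ Finset.Icc 1 n, |β i - α| * p i := by
  set e : ℕ → ℝ := fun i => |β i - α| * p i with he
  have hepos : ∀ i ∈ Finset.Icc 1 n, 0 ≤ e i := fun i hi =>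
    mul_nonneg (abs_nonneg _) (hp i hi).le
  have step1 : ∑ i ∈ Finset.Icc 1 n, ∑ j ∈ Finset.Icc (i+1) n,
      (p j - p i) * (if β j * p j < β i * p i then 1 else 0)
      ≤ ∑ i ∈ Finset.Icc 1 n, ∑ j ∈ Finset.Icc (i+1) n, (1/α) * (e i + e j) := by
    apply Finset.sum_le_sum
    intro i hi
    apply Finset.sum_le_sum
    intro j hj
    have hi' := Finset.mem_Icc.mp hi
    have hj' := Finset.mem_Icc.mp hj
    have hjmem : j ∈ Finset.Icc 1 n := Finset.mem_Icc.mpr ⟨by omega, hj'.2⟩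
    have hpi := hp i hi
    have hpj := hp j hjmem
    by_cases h : β j * p j < β i * p i
    · simp only [h, if_true, mul_one]
      rw [one_div, ← div_eq_inv_mul, le_div_iff₀ hα0]
      have h1 : (β i - α) * p i ≤ e i :=
        mul_le_mul_of_nonneg_right (le_abs_self _) hpi.le
      have h2 : (α - β j) * p j ≤ e j := by
        have : α - β j ≤ |β j - α| := by rw [abs_sub_comm]; exact le_abs_self _
        exact mul_le_mul_of_nonneg_right this hpj.le
      nlinarith [h1, h2, h]
    · simp only [h, if_false, mul_zero]
      have : (0:ℝ) ≤ 1/α := by positivity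
      exact mul_nonneg this (add_nonneg (hepos i hi) (hepos j hjmem))
  have hswap : ∑ i ∈ Finset.Icc 1 n, ∑ j ∈ Finset.Icc (i+1) n, e j
      = ∑ j ∈ Finset.Icc 1 n, ∑ i ∈ Finset.Icc 1 (j-1), e j := by
    apply Finset.sum_comm'
    intro i j
    simp only [Finset.mem_Icc]
    omega
  have hcount : ∑ i ∈ Finset.Icc 1 n, ∑ j ∈ Finset.Icc (i+1) n, (e i + e j)
      = ((n:ℝ) - 1) * ∑ i ∈ Finset.Icc 1 n, e i := by
    rw [Finset.mul_sum]
    simp only [Finset.sum_add_distrib]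
    rw [hswap]
    rw [← Finset.sum_add_distrib]
    apply Finset.sum_congr rfl
    intro i hi
    have hi' := Finset.mem_Icc.mp hi
    rw [Finset.sum_const, Finset.sum_const, Nat.card_Icc, Nat.card_Icc,
      nsmul_eq_mul, nsmul_eq_mul]
    have c1 : ((n + 1 - (i + 1) : ℕ) : ℝ) = (n : ℝ) - (i : ℝ) := by
      have : (n + 1 - (i + 1) : ℕ) = n - i := by omega
      rw [this, Nat.cast_sub hi'.2]
    have c2 : ((i - 1 + 1 - 1 : ℕ) : ℝ) = (i : ℝ) - 1 := by
      have : (i - 1 + 1 - 1 : ℕ) = i - 1 := by omega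
      rw [this, Nat.cast_sub hi'.1]
      simp
    rw [c1, c2]
    ring
  calc ∑ i ∈ Finset.Icc 1 n, ∑ j ∈ Finset.Icc (i+1) n,
      (p j - p i) * (if β j * p j < β i * p i then 1 else 0)
      ≤ ∑ i ∈ Finset.Icc 1 n, ∑ j ∈ Finset.Icc (i+1) n, (1/α) * (e i + e j) := step1
    _ = (1/α) * ∑ i ∈ Finset.Icc 1 n, ∑ j ∈ Finset.Icc (i+1) n, (e i + e j) := by
        simp [Finset.mul_sum]
    _ = (((n : ℝ) - 1) / α) * ∑ i ∈ Finset.Icc 1 n, e i := by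
        rw [hcount]; ring
end

section
/- Let n ≥ 1, let p_1 ≤ p_2 ≤ … ≤ p_n be positive reals, let α ∈ (0,1], and let β_1,…,β_n ∈ [0,1]. With M(i,j) = p_i + β_i·p_i if β_i·p_i ≤ β_j·p_j and M(i,j) = p_j + β_j·p_j otherwise (for i < j), it holds that Σ_{i=1}^n p_i + Σ_{1≤i<j≤n} M(i,j) ≤ (1+α)·Σ_{i=1}^n (n−i+1)·p_i + (1 + 1/α)·n·Σ_{i=1}^n |β_i − α|·p_i. -/
open Finset in
private lemma aux_pointwise (α pi pj bi bj : ℝ) (hα0 : 0 < α)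
    (hpi : 0 < pi) (hpj : 0 < pj) (hij : pi ≤ pj)
    (hbi : bi ≤ 1) (hbj0 : 0 ≤ bj) :
    (if bi * pi ≤ bj * pj then pi + bi * pi else pj + bj * pj)
      ≤ (1 + α) * pi + (1 + 1 / α) * (|bi - α| * pi + |bj - α| * pj) := by
  have h1 : (bi - α) * pi ≤ |bi - α| * pi :=
    mul_le_mul_of_nonneg_right (le_abs_self _) hpi.le
  have h2 : (α - bj) * pj ≤ |bj - α| * pj := by
    have : α - bj ≤ |bj - α| := by rw [abs_sub_comm]; exact le_abs_self _
    exact mul_le_mul_of_nonneg_right this hpj.le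
  have hei : 0 ≤ |bi - α| * pi := mul_nonneg (abs_nonneg _) hpi.le
  have hej : 0 ≤ |bj - α| * pj := mul_nonneg (abs_nonneg _) hpj.le
  have hE : (1 + 1 / α) * (|bi - α| * pi + |bj - α| * pj)
      = (|bi - α| * pi + |bj - α| * pj) + (|bi - α| * pi + |bj - α| * pj) / α := by
    field_simp
  have hEdiv : 0 ≤ (|bi - α| * pi + |bj - α| * pj) / α :=
    div_nonneg (by linarith) hα0.le
  split_ifs with h
  · nlinarith
  · push_neg at h
    -- key : α * pj ≤ α * pi + E
    have hkey : α * pj ≤ α * pi + (|bi - α| * pi + |bj - α| * pj) := by nlinarith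
    have h3 : pj - pi ≤ (|bi - α| * pi + |bj - α| * pj) / α := by
      rw [le_div_iff₀ hα0]; nlinarith
    nlinarith

open Finset in
/-- Smoothness bound for blindly following the signals (Corollary). -/
theorem stmt_4 (n : ℕ) (hn : 1 ≤ n) (p β : ℕ → ℝ) (α : ℝ)
    (hα0 : 0 < α) (hα1 : α ≤ 1)
    (hp : ∀ i ∈ Finset.Icc 1 n, 0 < p i)
    (hmono : ∀ i j, 1 ≤ i → i ≤ j → j ≤ n → p i ≤ p j)
    (hβ : ∀ i ∈ Finset.Icc 1 n, β i ∈ Set.Icc (0 : ℝ) 1) :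
    (∑ i ∈ Finset.Icc 1 n, p i)
      + ∑ i ∈ Finset.Icc 1 n, ∑ j ∈ Finset.Icc (i + 1) n,
          (if β i * p i ≤ β j * p j then p i + β i * p i else p j + β j * p j)
    ≤ (1 + α) * ∑ i ∈ Finset.Icc 1 n, ((n : ℝ) - i + 1) * p i
      + (1 + 1 / α) * n * ∑ i ∈ Finset.Icc 1 n, |β i - α| * p i := by
  set e : ℕ → ℝ := fun i => |β i - α| * p i with he
  -- pointwise bound on the double sum
  have step1 : ∑ i ∈ Finset.Icc 1 n, ∑ j ∈ Finset.Icc (i + 1) n,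
      (if β i * p i ≤ β j * p j then p i + β i * p i else p j + β j * p j)
      ≤ ∑ i ∈ Finset.Icc 1 n, ∑ j ∈ Finset.Icc (i + 1) n,
        ((1 + α) * p i + (1 + 1 / α) * (e i + e j)) := by
    refine Finset.sum_le_sum fun i hi => Finset.sum_le_sum fun j hj => ?_
    simp only [Finset.mem_Icc] at hi hj
    have hjmem : j ∈ Finset.Icc 1 n := by simp [Finset.mem_Icc]; omega
    have himem : i ∈ Finset.Icc 1 n := by simp [Finset.mem_Icc]; omega
    exact aux_pointwise α (p i) (p j) (β i) (β j) hα0 (hp i himem) (hp j hjmem)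
      (hmono i j hi.1 (by omega) hj.2) (hβ i himem).2 (hβ j hjmem).1
  -- split the bounding sum
  have card_eq : ∀ i ∈ Finset.Icc 1 n, ((Finset.Icc (i+1) n).card : ℝ) = (n : ℝ) - i := by
    intro i hi
    simp only [Finset.mem_Icc] at hi
    rw [Nat.card_Icc]
    have : n + 1 - (i + 1) = n - i := by omega
    rw [this, Nat.cast_sub hi.2]
  have step2 : ∑ i ∈ Finset.Icc 1 n, ∑ j ∈ Finset.Icc (i + 1) n,
        ((1 + α) * p i + (1 + 1 / α) * (e i + e j))
      = (∑ i ∈ Finset.Icc 1 n, ((n:ℝ) - i) * ((1 + α) * p i + (1 + 1 / α) * e i))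
        + (1 + 1 / α) * ∑ i ∈ Finset.Icc 1 n, ((i:ℝ) - 1) * e i := by
    have swap : ∑ i ∈ Finset.Icc 1 n, ∑ j ∈ Finset.Icc (i + 1) n, e j
        = ∑ j ∈ Finset.Icc 1 n, ((j:ℝ) - 1) * e j := by
      have h1 : ∀ a m : ℕ, Finset.Icc a m = Finset.Ico a (m+1) := fun a m =>
        (Finset.Ico_add_one_right_eq_Icc a m).symm
      calc ∑ i ∈ Finset.Icc 1 n, ∑ j ∈ Finset.Icc (i + 1) n, e j
          = ∑ i ∈ Finset.Ico 1 (n+1), ∑ j ∈ Finset.Ico (i + 1) (n+1), e j := by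
            rw [← h1]; exact Finset.sum_congr rfl fun i _ => by rw [← h1]
        _ = ∑ j ∈ Finset.Ico 1 (n+1), ∑ i ∈ Finset.Ico 1 j, e j :=
            Finset.sum_Ico_Ico_comm' 1 (n+1) fun _ j => e j
        _ = ∑ j ∈ Finset.Icc 1 n, ((j:ℝ) - 1) * e j := by
            rw [← h1]
            refine Finset.sum_congr rfl fun j hj => ?_
            simp only [Finset.mem_Icc] at hj
            rw [Finset.sum_const, nsmul_eq_mul, Nat.card_Ico, Nat.cast_sub hj.1]
            simp
    calc ∑ i ∈ Finset.Icc 1 n, ∑ j ∈ Finset.Icc (i + 1) n,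
          ((1 + α) * p i + (1 + 1 / α) * (e i + e j))
        = ∑ i ∈ Finset.Icc 1 n, (((Finset.Icc (i+1) n).card : ℝ)
            * ((1 + α) * p i + (1 + 1 / α) * e i)
            + (1 + 1/α) * ∑ j ∈ Finset.Icc (i + 1) n, e j) := by
          refine Finset.sum_congr rfl fun i _ => ?_
          have hs : ∀ j, (1 + α) * p i + (1 + 1 / α) * (e i + e j)
              = ((1 + α) * p i + (1 + 1 / α) * e i) + (1 + 1/α) * e j := fun j => by ring
          simp_rw [hs]
          rw [Finset.sum_add_distrib, Finset.sum_const, nsmul_eq_mul, ← Finset.mul_sum]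
      _ = _ := by
          rw [Finset.sum_add_distrib, ← Finset.mul_sum, swap]
          congr 1
          exact Finset.sum_congr rfl fun i hi => by rw [card_eq i hi]
  -- nonnegativity facts
  have hSnn : (0:ℝ) ≤ ∑ i ∈ Finset.Icc 1 n, e i :=
    Finset.sum_nonneg fun i hi => mul_nonneg (abs_nonneg _) (hp i hi).le
  have hPnn : (0:ℝ) ≤ ∑ i ∈ Finset.Icc 1 n, p i :=
    Finset.sum_nonneg fun i hi => (hp i hi).le
  have hc : 0 < 1 + 1/α := by positivity
  -- combine
  have final : (∑ i ∈ Finset.Icc 1 n, ((n:ℝ) - i) * ((1 + α) * p i + (1 + 1 / α) * e i))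
        + (1 + 1 / α) * ∑ i ∈ Finset.Icc 1 n, ((i:ℝ) - 1) * e i
      ≤ (1 + α) * ∑ i ∈ Finset.Icc 1 n, ((n : ℝ) - i + 1) * p i
        + (1 + 1 / α) * n * ∑ i ∈ Finset.Icc 1 n, e i
        - ∑ i ∈ Finset.Icc 1 n, p i := by
    have expand : (∑ i ∈ Finset.Icc 1 n, ((n:ℝ) - i) * ((1 + α) * p i + (1 + 1 / α) * e i))
          + (1 + 1 / α) * ∑ i ∈ Finset.Icc 1 n, ((i:ℝ) - 1) * e i
        = (1 + α) * ∑ i ∈ Finset.Icc 1 n, ((n:ℝ) - i) * p i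
          + (1 + 1/α) * ((n:ℝ) - 1) * ∑ i ∈ Finset.Icc 1 n, e i := by
      rw [Finset.mul_sum, Finset.mul_sum, Finset.mul_sum, ← Finset.sum_add_distrib,
        ← Finset.sum_add_distrib]
      exact Finset.sum_congr rfl fun i _ => by ring
    rw [expand]
    have h1 : (1 + α) * ∑ i ∈ Finset.Icc 1 n, ((n : ℝ) - i + 1) * p i
        = (1 + α) * ∑ i ∈ Finset.Icc 1 n, ((n:ℝ) - i) * p i
          + (1 + α) * ∑ i ∈ Finset.Icc 1 n, p i := by
      rw [← mul_add, ← Finset.sum_add_distrib]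
      congr 1
      exact Finset.sum_congr rfl fun i _ => by ring
    have h2 : (1 + 1/α) * ((n:ℝ) - 1) * ∑ i ∈ Finset.Icc 1 n, e i
        ≤ (1 + 1/α) * n * ∑ i ∈ Finset.Icc 1 n, e i := by
      apply mul_le_mul_of_nonneg_right _ hSnn
      apply mul_le_mul_of_nonneg_left _ hc.le
      linarith
    nlinarith
  rw [he] at *
  linarith [step1, step2 ▸ step1]
end

section
/- For every natural number m and all reals μ₁, μ₂ > 0, the double integral identity ∫₀^∞ t^m e^{−μ₁ t} (∫₀^t u^m e^{−μ₂ u} du) dt = ((2m+1)! / (2 · 4^m · (μ₁ μ₂)^{m+1})) · ∫_{(μ₁−μ₂)/(μ₁+μ₂)}^{1} (1 − x²)^m dx holds. -/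
/-!
Substituting `u = t v` turns the left side into `∫∫ v ^ k t ^ (m + k + 1) e^{-(μ₁ + μ₂ v) t}`
over `(0, ∞) × (0, 1]`; integrating out `t` first (Fubini) leaves the Gamma integral
`(m + k + 1)! v ^ k / (μ₁ + μ₂ v) ^ (m + k + 2)`. For `k = m`, the Möbius substitution
`x = (μ₁ - μ₂ v) / (μ₁ + μ₂ v)`, which maps `[0, 1]` onto `[(μ₁ - μ₂) / (μ₁ + μ₂), 1]` with
`1 - x² = 4 μ₁ μ₂ v / (μ₁ + μ₂ v)²` and `dx = -2 μ₁ μ₂ dv / (μ₁ + μ₂ v)²`, turns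
`v ^ m dv / (μ₁ + μ₂ v) ^ (2m + 2)` into a constant multiple of `(1 - x²) ^ m dx`.
-/

open MeasureTheory Real Set intervalIntegral
open scoped Nat

lemma integral_pow_mul_exp_neg_mul_Ioi (n : ℕ) {r : ℝ} (hr : 0 < r) :
    ∫ t in Ioi (0 : ℝ), t ^ n * exp (-(r * t)) = n ! / r ^ (n + 1) := by
  have h := integral_rpow_mul_exp_neg_mul_Ioi (a := n + 1) (by positivity) hr
  rw [add_sub_cancel_right, Gamma_nat_eq_factorial, ← Nat.cast_succ, rpow_natCast, one_div,
    inv_pow, inv_mul_eq_div] at h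
  simpa only [rpow_natCast] using h

lemma integrableOn_pow_mul_exp_neg_mul_Ioi (n : ℕ) {r : ℝ} (hr : 0 < r) :
    IntegrableOn (fun t ↦ t ^ n * exp (-(r * t))) (Ioi 0) := by
  simpa only [rpow_natCast, rpow_one, neg_mul] using
    integrableOn_rpow_mul_exp_neg_mul_rpow (s := n) (p := 1)
      (neg_one_lt_zero.trans_le n.cast_nonneg) one_pos hr

lemma add_mul_pos_of_mem_Icc {μ₁ μ₂ v : ℝ} (hμ₁ : 0 < μ₁) (hμ : 0 < μ₁ + μ₂)
    (hv : v ∈ Icc (0 : ℝ) 1) : 0 < μ₁ + μ₂ * v := by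
  rcases le_or_gt 0 μ₂ with h | h <;> nlinarith [hv.1, hv.2]

lemma mul_intervalIntegral_pow_mul_exp (m k : ℕ) (μ₁ μ₂ t : ℝ) :
    t ^ m * exp (-μ₁ * t) * ∫ u in (0 : ℝ)..t, u ^ k * exp (-μ₂ * u)
      = ∫ v in (0 : ℝ)..1, v ^ k * (t ^ (m + k + 1) * exp (-((μ₁ + μ₂ * v) * t))) := by
  have hscale :=
    mul_integral_comp_mul_left (a := 0) (b := 1) (f := fun u ↦ u ^ k * exp (-μ₂ * u)) t
  rw [mul_zero, mul_one] at hscale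
  rw [← hscale, ← mul_assoc, ← intervalIntegral.integral_const_mul]
  refine integral_congr fun v _ ↦ ?_
  have hexp : exp (-((μ₁ + μ₂ * v) * t)) = exp (-μ₁ * t) * exp (-μ₂ * (t * v)) := by
    rw [← exp_add]; ring_nf
  simp only [hexp]
  ring

lemma integral_pow_mul_pow_mul_exp_neg_Ioi (n k : ℕ) {μ₁ μ₂ v : ℝ} (hv : 0 < μ₁ + μ₂ * v) :
    ∫ t in Ioi (0 : ℝ), v ^ k * (t ^ n * exp (-((μ₁ + μ₂ * v) * t)))
      = n ! * (v ^ k / (μ₁ + μ₂ * v) ^ (n + 1)) := by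
  rw [MeasureTheory.integral_const_mul, integral_pow_mul_exp_neg_mul_Ioi n hv]
  ring

lemma integrable_pow_mul_pow_mul_exp_neg (n k : ℕ) {μ₁ μ₂ : ℝ} (hμ₁ : 0 < μ₁)
    (hμ : 0 < μ₁ + μ₂) :
    Integrable (fun p : ℝ × ℝ ↦ p.2 ^ k * (p.1 ^ n * exp (-((μ₁ + μ₂ * p.2) * p.1))))
      ((volume.restrict (Ioi 0)).prod (volume.restrict (Ioc 0 1))) := by
  have hpos : ∀ v ∈ Ioc (0 : ℝ) 1, 0 < μ₁ + μ₂ * v := fun v hv ↦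
    add_mul_pos_of_mem_Icc hμ₁ hμ (Ioc_subset_Icc_self hv)
  rw [integrable_prod_iff' (by fun_prop)]
  constructor
  · filter_upwards [ae_restrict_mem measurableSet_Ioc] with v hv
    exact (integrableOn_pow_mul_exp_neg_mul_Ioi n (hpos v hv)).const_mul _
  · have hcont : ContinuousOn (fun v : ℝ ↦ n ! * (v ^ k / (μ₁ + μ₂ * v) ^ (n + 1))) (Icc 0 1) :=
      ContinuousOn.mul continuousOn_const <| ContinuousOn.div (by fun_prop) (by fun_prop)
        fun v hv ↦ (pow_pos (add_mul_pos_of_mem_Icc hμ₁ hμ hv) _).ne'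
    refine (hcont.integrableOn_Icc.mono_set Ioc_subset_Icc_self).congr_fun
      (fun v hv ↦ ?_) measurableSet_Ioc
    dsimp only
    rw [← integral_pow_mul_pow_mul_exp_neg_Ioi n k (hpos v hv)]
    refine setIntegral_congr_fun measurableSet_Ioi fun t ht ↦ ?_
    exact (norm_of_nonneg <| mul_nonneg (pow_nonneg hv.1.le k) <|
      mul_nonneg (pow_nonneg (le_of_lt ht) n) (exp_nonneg _)).symm

lemma integral_pow_mul_exp_mul_integral_pow_mul_exp (m k : ℕ) {μ₁ μ₂ : ℝ} (hμ₁ : 0 < μ₁)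
    (hμ : 0 < μ₁ + μ₂) :
    ∫ t in Ioi (0 : ℝ), t ^ m * exp (-μ₁ * t) * ∫ u in (0 : ℝ)..t, u ^ k * exp (-μ₂ * u)
      = (m + k + 1)! * ∫ v in (0 : ℝ)..1, v ^ k / (μ₁ + μ₂ * v) ^ (m + k + 2) := by
  calc _ = ∫ t in Ioi (0 : ℝ), ∫ v in Ioc (0 : ℝ) 1,
              v ^ k * (t ^ (m + k + 1) * exp (-((μ₁ + μ₂ * v) * t))) := by
          simp only [mul_intervalIntegral_pow_mul_exp, integral_of_le zero_le_one]
    _ = ∫ v in Ioc (0 : ℝ) 1, ∫ t in Ioi (0 : ℝ),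
              v ^ k * (t ^ (m + k + 1) * exp (-((μ₁ + μ₂ * v) * t))) :=
          integral_integral_swap (integrable_pow_mul_pow_mul_exp_neg _ k hμ₁ hμ)
    _ = _ := by
          rw [setIntegral_congr_fun measurableSet_Ioc fun v hv ↦
              integral_pow_mul_pow_mul_exp_neg_Ioi _ k
                (add_mul_pos_of_mem_Icc hμ₁ hμ (Ioc_subset_Icc_self hv)),
            ← integral_of_le zero_le_one, intervalIntegral.integral_const_mul]

lemma intervalIntegral_one_sub_sq_pow (m : ℕ) {μ₁ μ₂ : ℝ} (hμ₁ : 0 < μ₁) (hμ : 0 < μ₁ + μ₂) :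
    ∫ x in ((μ₁ - μ₂) / (μ₁ + μ₂))..1, (1 - x ^ 2) ^ m
      = 2 * 4 ^ m * (μ₁ * μ₂) ^ (m + 1) *
          ∫ v in (0 : ℝ)..1, v ^ m / (μ₁ + μ₂ * v) ^ (2 * m + 2) := by
  have hpos : ∀ v ∈ uIcc (0 : ℝ) 1, 0 < μ₁ + μ₂ * v := fun v hv ↦
    add_mul_pos_of_mem_Icc hμ₁ hμ (by rwa [uIcc_of_le zero_le_one] at hv)
  set x : ℝ → ℝ := fun v ↦ (μ₁ - μ₂ * v) / (μ₁ + μ₂ * v)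
  set x' : ℝ → ℝ := fun v ↦ -(2 * μ₁ * μ₂) / (μ₁ + μ₂ * v) ^ 2
  have hx : ∀ v ∈ uIcc (0 : ℝ) 1, HasDerivAt x (x' v) v := fun v hv ↦ by
    refine (((hasDerivAt_id' v).const_mul μ₂ |>.const_sub μ₁).div
      ((hasDerivAt_id' v).const_mul μ₂ |>.const_add μ₁) (hpos v hv).ne').congr_deriv ?_
    field_simp
    ring
  have hx' : ContinuousOn x' (uIcc 0 1) :=
    continuousOn_const.div (by fun_prop) fun v hv ↦ (pow_pos (hpos v hv) 2).ne'
  have hsubst := integral_comp_mul_deriv hx hx' (g := fun x ↦ (1 - x ^ 2) ^ m) (by fun_prop)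
  have hx0 : x 0 = 1 := by simp [x, hμ₁.ne']
  have hx1 : x 1 = (μ₁ - μ₂) / (μ₁ + μ₂) := by simp [x]
  rw [hx0, hx1] at hsubst
  rw [integral_symm, ← hsubst, ← intervalIntegral.integral_neg,
    ← intervalIntegral.integral_const_mul]
  refine integral_congr fun v hv ↦ ?_
  have hne := (hpos v hv).ne'
  have hsq : 1 - x v ^ 2 = 4 * (μ₁ * μ₂) * v / (μ₁ + μ₂ * v) ^ 2 := by
    simp only [x]; field_simp; ring
  simp only [Function.comp, hsq, x', div_pow, mul_pow, ← pow_mul]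
  field_simp
  ring

open MeasureTheory Real in
/-- Gamma comparison double-integral identity. -/
theorem stmt_5 (m : ℕ) (μ₁ μ₂ : ℝ) (hμ₁ : 0 < μ₁) (hμ₂ : 0 < μ₂) :
    ∫ t in Set.Ioi (0 : ℝ),
        t ^ m * Real.exp (-μ₁ * t) * ∫ u in (0 : ℝ)..t, u ^ m * Real.exp (-μ₂ * u)
      = ((Nat.factorial (2 * m + 1) : ℕ) : ℝ) / (2 * 4 ^ m * (μ₁ * μ₂) ^ (m + 1))
          * ∫ x in ((μ₁ - μ₂) / (μ₁ + μ₂))..(1 : ℝ), (1 - x ^ 2) ^ m := by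
  have hμ : 0 < μ₁ + μ₂ := add_pos hμ₁ hμ₂
  rw [integral_pow_mul_exp_mul_integral_pow_mul_exp m m hμ₁ hμ,
    intervalIntegral_one_sub_sq_pow m hμ₁ hμ, ← two_mul]
  field_simp
end

section
/- Let m ≥ 1 be a natural number and let μ₁, μ₂ > 0. Let τ₁ and τ₂ be independent real random variables, where τ₁ has the Gamma distribution with shape m+1 and rate μ₁, and τ₂ has the Gamma distribution with shape m+1 and rate μ₂. Then P(τ₂ < τ₁) ≤ ((m + 1/2)/√(π m)) · ∫_{(μ₁−μ₂)/(μ₁+μ₂)}^{1} (1 − x²)^m dx. -/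
/-!
By independence, `P(τ₂ < τ₁) = E[F(τ₁)]`, where `F(x) = 1 - ∑_{k ≤ m} e^{-μ₂x} (μ₂x)^k / k!` is
the distribution function of `τ₂`. Integrating `F` term by term against the density of `τ₁` gives
`1 - ∑_{k ≤ m} C(m+k, k) (1-q)^{m+1} q^k` with `q = μ₂ / (μ₁ + μ₂)`, and differentiating in `q`
identifies this with the incomplete beta integral `(2m+1) C(2m, m) ∫₀^q t^m (1-t)^m dt`.
The substitution `x = 1 - 2t` turns it into `(m + 1/2) C(2m, m) 4^{-m} ∫_{1-2q}^1 (1-x²)^m dx`,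
and Wallis' inequality bounds `C(2m, m)` by `4^m / √(π m)`.
-/

open MeasureTheory ProbabilityTheory Real Set Finset Nat

lemma ProbabilityTheory.IndepFun.measureReal_lt_eq_integral_cdf {Ω : Type*}
    [MeasurableSpace Ω] {P : Measure Ω} [IsProbabilityMeasure P] {X Y : Ω → ℝ}
    {μ ν : Measure ℝ} [NullSingletonClass ν]
    (hX : HasLaw X μ P) (hY : HasLaw Y ν P) (hXY : IndepFun X Y P) :
    P.real {ω | Y ω < X ω} = ∫ x, cdf ν x ∂μ := by
  have : IsProbabilityMeasure ν := hY.isProbabilityMeasure_iff.mp ‹_›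
  have hlt : MeasurableSet {z : ℝ × ℝ | z.2 < z.1} :=
    measurableSet_lt measurable_snd measurable_fst
  rw [(hXY.hasLaw_prod hX hY).measureReal_eq hlt, measureReal_def, Measure.prod_apply hlt,
    integral_eq_lintegral_of_nonneg_ae (ae_of_all _ (cdf_nonneg ν))
      (cdf ν).mono.measurable.aestronglyMeasurable]
  congr 1
  refine lintegral_congr fun x => ?_
  rw [ofReal_cdf, ← measure_congr Iio_ae_eq_Iic]
  rfl

/- The density and the distribution function of the Gamma law of shape `m + 1` and rate `μ`
(the Erlang law), as formulas valid on `[0, ∞)` only. -/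
noncomputable def erlangPDF (m : ℕ) (μ x : ℝ) : ℝ := μ ^ (m + 1) / m ! * x ^ m * exp (-(μ * x))

noncomputable def erlangCDF (m : ℕ) (μ x : ℝ) : ℝ :=
  1 - ∑ k ∈ range (m + 1), exp (-(μ * x)) * (μ * x) ^ k / k !

lemma continuous_erlangPDF (m : ℕ) (μ : ℝ) : Continuous (erlangPDF m μ) := by
  unfold erlangPDF; fun_prop

lemma hasDerivAt_erlangCDF (m : ℕ) (μ x : ℝ) :
    HasDerivAt (erlangCDF m μ) (erlangPDF m μ x) x := by
  have hexp : HasDerivAt (fun x => exp (-(μ * x))) (-μ * exp (-(μ * x))) x := by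
    simpa [mul_comm] using ((hasDerivAt_id x).const_mul μ).fun_neg.exp
  induction m with
  | zero =>
    have hcdf : erlangCDF 0 μ = fun y => 1 - exp (-(μ * y)) := by ext y; simp [erlangCDF]
    rw [hcdf]
    refine (hexp.const_sub 1).congr_deriv ?_
    simp [erlangPDF]
  | succ m ih =>
    have hterm : HasDerivAt (fun x => exp (-(μ * x)) * (μ * x) ^ (m + 1) / (m + 1)!)
        (erlangPDF m μ x - erlangPDF (m + 1) μ x) x := by
      have hpow : HasDerivAt (fun x => (μ * x) ^ (m + 1)) ((m + 1) * (μ * x) ^ m * μ) x := by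
        simpa using ((hasDerivAt_id x).const_mul μ).fun_pow (m + 1)
      refine ((hexp.mul hpow).div_const ((m + 1)! : ℝ)).congr_deriv ?_
      simp only [erlangPDF, factorial_succ, cast_mul, cast_add, cast_one]
      field_simp
      ring
    have hsplit : erlangCDF (m + 1) μ
        = fun x => erlangCDF m μ x - exp (-(μ * x)) * (μ * x) ^ (m + 1) / (m + 1)! := by
      ext y; simp only [erlangCDF, sum_range_succ _ (m + 1)]; ring
    rw [hsplit]
    exact (ih.sub hterm).congr_deriv (by ring)

lemma erlangCDF_zero (m : ℕ) (μ : ℝ) : erlangCDF m μ 0 = 0 := by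
  simp [erlangCDF, sum_range_succ']

lemma integrableOn_erlangPDF (m : ℕ) {μ : ℝ} (hμ : 0 < μ) :
    IntegrableOn (erlangPDF m μ) (Ioi 0) := by
  have h := (integrableOn_rpow_mul_exp_neg_mul_rpow (s := (m : ℝ)) (p := 1)
    (by linarith [m.cast_nonneg (α := ℝ)]) one_pos hμ).const_mul (μ ^ (m + 1) / m !)
  refine IntegrableOn.congr_fun h (fun x _ => ?_) measurableSet_Ioi
  simp [erlangPDF, mul_assoc]

lemma integral_erlangPDF (m : ℕ) {μ : ℝ} (hμ : 0 < μ) :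
    ∫ x in Ioi 0, erlangPDF m μ x = 1 := by
  have h := integral_rpow_mul_exp_neg_mul_Ioi (a := (m : ℝ) + 1) (by positivity) hμ
  simp only [add_sub_cancel_right, rpow_natCast] at h
  rw [Gamma_nat_eq_factorial, ← Nat.cast_succ, rpow_natCast] at h
  simp only [erlangPDF, mul_assoc]
  rw [integral_const_mul, h, Nat.succ_eq_add_one, one_div, inv_pow]
  field_simp

lemma gammaPDFReal_natCast_add_one (m : ℕ) (μ : ℝ) {x : ℝ} (hx : 0 ≤ x) :
    gammaPDFReal (m + 1) μ x = erlangPDF m μ x := by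
  rw [gammaPDFReal, if_pos hx, Gamma_nat_eq_factorial, add_sub_cancel_right, rpow_natCast,
    ← Nat.cast_succ, rpow_natCast, erlangPDF]

lemma cdf_gammaMeasure_natCast_add_one (m : ℕ) {μ x : ℝ} (hμ : 0 < μ) (hx : 0 ≤ x) :
    cdf (gammaMeasure (m + 1) μ) x = erlangCDF m μ x := by
  rw [cdf_gammaMeasure_eq_integral (by positivity) hμ,
    setIntegral_eq_of_subset_of_forall_sdiff_eq_zero measurableSet_Iic Icc_subset_Iic_self,
    integral_Icc_eq_integral_Ioc, ← intervalIntegral.integral_of_le hx]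
  · rw [intervalIntegral.integral_congr (g := erlangPDF m μ) fun y hy =>
      gammaPDFReal_natCast_add_one m μ (uIcc_of_le hx ▸ hy).1,
      intervalIntegral.integral_eq_sub_of_hasDerivAt (fun y _ => hasDerivAt_erlangCDF m μ y)
        ((continuous_erlangPDF m μ).intervalIntegrable 0 x), erlangCDF_zero, sub_zero]
  · rintro y ⟨hyx, hy⟩
    have hy0 : y < 0 := not_le.mp fun h => hy ⟨h, hyx⟩
    rw [gammaPDFReal, if_neg hy0.not_ge]

lemma integral_gammaMeasure {a r : ℝ} (ha : 0 < a) (hr : 0 < r) (g : ℝ → ℝ) :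
    ∫ x, g x ∂gammaMeasure a r = ∫ x in Ioi 0, gammaPDFReal a r x * g x := by
  rw [gammaMeasure, integral_withDensity_eq_integral_toReal_smul (f := gammaPDF a r)
    (measurable_gammaPDFReal a r).ennreal_ofReal
    (ae_of_all _ fun _ => ENNReal.ofReal_lt_top), ← integral_Ici_eq_integral_Ioi,
    setIntegral_eq_integral_of_forall_compl_eq_zero]
  · simp only [gammaPDF, ENNReal.toReal_ofReal (gammaPDFReal_nonneg ha hr _), smul_eq_mul]
  · intro x hx
    simp [gammaPDFReal, if_neg (by simpa using hx : ¬ 0 ≤ x)]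

instance (a r : ℝ) : NullSingletonClass (gammaMeasure a r) := by
  unfold gammaMeasure; infer_instance

lemma erlangPDF_mul_exp_mul_pow_div (m k : ℕ) {μ₁ μ₂ : ℝ} (hμ : μ₁ + μ₂ ≠ 0) (x : ℝ) :
    erlangPDF m μ₁ x * (exp (-(μ₂ * x)) * (μ₂ * x) ^ k / k !)
      = (m + k).choose k * (μ₁ / (μ₁ + μ₂)) ^ (m + 1) * (μ₂ / (μ₁ + μ₂)) ^ k
          * erlangPDF (m + k) (μ₁ + μ₂) x := by
  have hexp : exp (-(μ₁ * x)) * exp (-(μ₂ * x)) = exp (-((μ₁ + μ₂) * x)) := by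
    rw [← exp_add]; ring_nf
  rw [← choose_symm_add, cast_add_choose, erlangPDF, erlangPDF, ← hexp]
  simp only [div_pow, pow_add, pow_one]
  field_simp
  ring

lemma integral_erlangPDF_mul_erlangCDF (m n : ℕ) {μ₁ μ₂ : ℝ} (hμ₁ : 0 < μ₁) (hμ₂ : 0 < μ₂) :
    ∫ x in Ioi 0, erlangPDF m μ₁ x * erlangCDF n μ₂ x
      = 1 - ∑ k ∈ range (n + 1),
          (m + k).choose k * (μ₁ / (μ₁ + μ₂)) ^ (m + 1) * (μ₂ / (μ₁ + μ₂)) ^ k := by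
  have hμ : 0 < μ₁ + μ₂ := add_pos hμ₁ hμ₂
  have hint : ∀ k ∈ range (n + 1), IntegrableOn (fun x => (m + k).choose k
      * (μ₁ / (μ₁ + μ₂)) ^ (m + 1) * (μ₂ / (μ₁ + μ₂)) ^ k * erlangPDF (m + k) (μ₁ + μ₂) x)
      (Ioi 0) :=
    fun k _ => (integrableOn_erlangPDF (m + k) hμ).const_mul _
  simp_rw [erlangCDF, mul_sub, mul_one, mul_sum, erlangPDF_mul_exp_mul_pow_div m _ hμ.ne']
  rw [integral_sub (integrableOn_erlangPDF m hμ₁) (integrable_finsetSum _ hint),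
    integral_finsetSum _ hint, integral_erlangPDF m hμ₁]
  simp_rw [integral_const_mul, integral_erlangPDF _ hμ, mul_one]

lemma integral_cdf_gammaMeasure_natCast_add_one (m n : ℕ) {μ₁ μ₂ : ℝ} (hμ₁ : 0 < μ₁)
    (hμ₂ : 0 < μ₂) :
    ∫ x, cdf (gammaMeasure (n + 1) μ₂) x ∂gammaMeasure (m + 1) μ₁
      = 1 - ∑ k ∈ range (n + 1),
          (m + k).choose k * (μ₁ / (μ₁ + μ₂)) ^ (m + 1) * (μ₂ / (μ₁ + μ₂)) ^ k := by
  rw [integral_gammaMeasure (by positivity) hμ₁, ← integral_erlangPDF_mul_erlangCDF m n hμ₁ hμ₂]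
  refine setIntegral_congr_fun measurableSet_Ioi fun x (hx : 0 < x) => ?_
  rw [gammaPDFReal_natCast_add_one m μ₁ hx.le, cdf_gammaMeasure_natCast_add_one n hμ₂ hx.le]

lemma hasDerivAt_sum_choose_mul_pow (m : ℕ) (u : ℝ) :
    HasDerivAt
      (fun u => ∑ k ∈ range (m + 1), ((m + k).choose k : ℝ) * ((1 - u) ^ (m + 1) * u ^ k))
      (-((2 * m + 1) * m.centralBinom * (u ^ m * (1 - u) ^ m))) u := by
  set w : ℕ → ℝ := fun k => k * (m + k).choose k * u ^ (k - 1) * (1 - u) ^ m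
  have hterm : ∀ k ∈ range (m + 1), HasDerivAt
      (fun u => ((m + k).choose k : ℝ) * ((1 - u) ^ (m + 1) * u ^ k)) (w k - w (k + 1)) u := by
    intro k _
    have h1u : HasDerivAt (fun u : ℝ => (1 - u) ^ (m + 1)) (-((m + 1) * (1 - u) ^ m)) u := by
      simpa using ((hasDerivAt_id u).const_sub 1).fun_pow (m + 1)
    refine ((h1u.mul (hasDerivAt_pow k u)).const_mul _).congr_deriv ?_
    have hchoose : ((m + k + 1).choose (k + 1) : ℝ) * (k + 1) = (m + k + 1) * (m + k).choose k := by
      exact_mod_cast (Nat.add_one_mul_choose_eq (m + k) k).symm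
    rcases k with _ | j
    · simp [w]
    · simp only [w, ← add_assoc, add_tsub_cancel_right, cast_add, cast_one] at hchoose ⊢
      linear_combination (1 - u) ^ m * u ^ (j + 1) * hchoose
  refine (HasDerivAt.fun_sum hterm).congr_deriv ?_
  have hcentral : ((2 * m + 1).choose (m + 1) : ℝ) * (m + 1) = (2 * m + 1) * m.centralBinom := by
    rw [centralBinom_eq_two_mul_choose]
    exact_mod_cast (Nat.add_one_mul_choose_eq (2 * m) m).symm
  rw [sum_range_sub']
  simp only [w, add_tsub_cancel_right, show m + (m + 1) = 2 * m + 1 by ring]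
  push_cast
  linear_combination -(u ^ m * (1 - u) ^ m) * hcentral

lemma one_sub_sum_choose_mul_pow_eq_integral (m : ℕ) (q : ℝ) :
    1 - ∑ k ∈ range (m + 1), ((m + k).choose k : ℝ) * ((1 - q) ^ (m + 1) * q ^ k)
      = (2 * m + 1) * m.centralBinom * ∫ t in 0..q, t ^ m * (1 - t) ^ m := by
  have hcont : Continuous fun t : ℝ =>
      -((2 * m + 1) * m.centralBinom * (t ^ m * (1 - t) ^ m)) := by
    fun_prop
  have h := intervalIntegral.integral_eq_sub_of_hasDerivAt
    (fun t _ => hasDerivAt_sum_choose_mul_pow m t) (hcont.intervalIntegrable 0 q)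
  have hF0 : ∑ k ∈ range (m + 1), ((m + k).choose k : ℝ) * ((1 - 0) ^ (m + 1) * 0 ^ k) = 1 := by
    simp [sum_range_succ']
  rw [intervalIntegral.integral_neg, intervalIntegral.integral_const_mul, hF0] at h
  linarith

lemma integral_one_sub_sq_pow (m : ℕ) (q : ℝ) :
    ∫ x in (1 - 2 * q)..1, (1 - x ^ 2) ^ m = 2 * 4 ^ m * ∫ t in 0..q, t ^ m * (1 - t) ^ m := by
  have h := intervalIntegral.integral_comp_sub_mul (fun x : ℝ => (1 - x ^ 2) ^ m)
    (a := 0) (b := q) two_ne_zero 1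
  have hpoint : ∀ t : ℝ, (1 - (1 - 2 * t) ^ 2) ^ m = 4 ^ m * (t ^ m * (1 - t) ^ m) := fun t => by
    rw [← mul_pow, ← mul_pow]; ring
  simp only [hpoint, intervalIntegral.integral_const_mul, mul_zero, sub_zero, smul_eq_mul] at h
  linear_combination -2 * h

theorem Nat.centralBinom_mul_sqrt_pi_mul_le_four_pow (n : ℕ) :
    (n.centralBinom : ℝ) * √(π * n) ≤ 4 ^ n := by
  have hfact : (n.centralBinom : ℝ) * n ! ^ 2 = (2 * n)! := by
    rw [centralBinom_eq_two_mul_choose, sq, ← mul_assoc, two_mul]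
    exact_mod_cast Nat.add_choose_mul_factorial_mul_factorial n n
  have hF : (0 : ℝ) < n ! := by exact_mod_cast n.factorial_pos
  have hC : (0 : ℝ) < n.centralBinom := by exact_mod_cast n.centralBinom_pos
  have hW := Wallis.le_W n
  rw [Wallis.W_eq_factorial_ratio, ← hfact, pow_mul, le_div_iff₀ (by positivity)] at hW
  have hWallis : (n.centralBinom : ℝ) ^ 2 * π * (2 * n + 1) ^ 2 ≤ 4 * (n + 1) * 16 ^ n := by
    refine le_of_mul_le_mul_right ?_ (by positivity : (0 : ℝ) < n ! ^ 4 / (4 * (n + 1)))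
    convert hW using 1 <;> field_simp <;> ring
  have hsq : (n.centralBinom : ℝ) ^ 2 * (π * n) ≤ 16 ^ n := by
    refine le_of_mul_le_mul_right ?_ (by positivity : (0 : ℝ) < 4 * (n + 1))
    calc (n.centralBinom : ℝ) ^ 2 * (π * n) * (4 * (n + 1))
        ≤ (n.centralBinom : ℝ) ^ 2 * π * (2 * n + 1) ^ 2 := by
          linear_combination mul_nonneg (sq_nonneg (n.centralBinom : ℝ)) pi_pos.le
      _ ≤ (16 : ℝ) ^ n * (4 * (n + 1)) := by linarith
  have h16 : ((4 : ℝ) ^ n) ^ 2 = 16 ^ n := by rw [← pow_mul, mul_comm, pow_mul]; norm_num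
  rwa [← pow_le_pow_iff_left₀ (by positivity) (by positivity) two_ne_zero, mul_pow,
    sq_sqrt (by positivity), h16]

open MeasureTheory ProbabilityTheory Real in
/-- Probability that one Gamma(m+1, μ₂) variable is smaller than an
independent Gamma(m+1, μ₁) variable. -/
theorem stmt_6 (m : ℕ) (hm : 1 ≤ m) (μ₁ μ₂ : ℝ) (hμ₁ : 0 < μ₁) (hμ₂ : 0 < μ₂)
    {Ω : Type*} [MeasurableSpace Ω] (P : Measure Ω) [IsProbabilityMeasure P]
    (τ₁ τ₂ : Ω → ℝ) (hτ₁ : Measurable τ₁) (hτ₂ : Measurable τ₂)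
    (hind : IndepFun τ₁ τ₂ P)
    (hd₁ : P.map τ₁ = gammaMeasure ((m : ℝ) + 1) μ₁)
    (hd₂ : P.map τ₂ = gammaMeasure ((m : ℝ) + 1) μ₂) :
    (P {ω | τ₂ ω < τ₁ ω}).toReal
      ≤ ((m + 1 / 2 : ℝ) / Real.sqrt (Real.pi * m))
          * ∫ x in ((μ₁ - μ₂) / (μ₁ + μ₂))..(1 : ℝ), (1 - x ^ 2) ^ m := by
  have hμ : 0 < μ₁ + μ₂ := add_pos hμ₁ hμ₂
  have hupper : μ₁ / (μ₁ + μ₂) = 1 - μ₂ / (μ₁ + μ₂) := by field_simp; ring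
  have hlower : (μ₁ - μ₂) / (μ₁ + μ₂) = 1 - 2 * (μ₂ / (μ₁ + μ₂)) := by field_simp; ring
  have hq : 0 ≤ μ₂ / (μ₁ + μ₂) ∧ μ₂ / (μ₁ + μ₂) ≤ 1 :=
    ⟨by positivity, div_le_one_of_le₀ (by linarith) hμ.le⟩
  set q := μ₂ / (μ₁ + μ₂)
  have hprob : (P {ω | τ₂ ω < τ₁ ω}).toReal
      = 1 - ∑ k ∈ range (m + 1), ((m + k).choose k : ℝ) * ((1 - q) ^ (m + 1) * q ^ k) := by
    rw [← measureReal_def, hind.measureReal_lt_eq_integral_cdf ⟨hτ₁.aemeasurable, hd₁⟩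
      ⟨hτ₂.aemeasurable, hd₂⟩, integral_cdf_gammaMeasure_natCast_add_one m m hμ₁ hμ₂, hupper]
    simp only [mul_assoc, q]
  rw [hprob, one_sub_sum_choose_mul_pow_eq_integral, hlower, integral_one_sub_sq_pow]
  have hI : 0 ≤ ∫ t in 0..q, t ^ m * (1 - t) ^ m :=
    intervalIntegral.integral_nonneg hq.1 fun t ht =>
      mul_nonneg (pow_nonneg ht.1 m) (pow_nonneg (by linarith [ht.2, hq.2]) m)
  have hsqrt : 0 < √(π * m) := sqrt_pos.mpr (mul_pos pi_pos (by exact_mod_cast hm))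
  have hbinom := Nat.centralBinom_mul_sqrt_pi_mul_le_four_pow m
  calc (2 * m + 1) * m.centralBinom * ∫ t in 0..q, t ^ m * (1 - t) ^ m
      = (m + 1 / 2) / √(π * m)
          * (2 * (m.centralBinom * √(π * m)) * ∫ t in 0..q, t ^ m * (1 - t) ^ m) := by
        field_simp
    _ ≤ (m + 1 / 2) / √(π * m) * (2 * 4 ^ m * ∫ t in 0..q, t ^ m * (1 - t) ^ m) := by
        gcongr
end

section
/- Let m ≥ 3 be a natural number. Then for every real r ≥ 1, (r − 1) · ∫_{(r−1)/(r+1)}^{1} (1 − x²)^m dx ≤ 1/(m − 1). -/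
/-!
Put `a = (r - 1)/(r + 1) ∈ [0, 1)`, so that `r - 1 = a (r + 1)` and `(r + 1)(1 - a) = 2`.
On `[a, 1]` we have `a ≤ x`, hence `a ∫ (1 - x²)^m ≤ ∫ x (1 - x²)^m = (1 - a²)^(m+1) / (2(m+1))`,
and the left-hand side is at most `(1 + a)(1 - a²)^m / (m + 1)`. Finally Bernoulli's inequality
gives `(1 + m a²)(1 - a²)^m ≤ (1 - a⁴)^m ≤ 1`, while `(m - 1)(1 + a) ≤ (m + 1)(1 + m a²)` since
the quadratic `m(m+1)a² - (m-1)a + 2` has negative discriminant.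
-/

open Set

theorem integral_mul_one_sub_sq_pow (a b : ℝ) (m : ℕ) :
    ∫ x in a..b, x * (1 - x ^ 2) ^ m
      = ((1 - a ^ 2) ^ (m + 1) - (1 - b ^ 2) ^ (m + 1)) / (2 * (m + 1)) := by
  have hderiv : ∀ x : ℝ, HasDerivAt (fun y : ℝ => -(1 - y ^ 2) ^ (m + 1) / (2 * (m + 1)))
      (x * (1 - x ^ 2) ^ m) x := by
    intro x
    have h : HasDerivAt (fun y : ℝ => -(1 - y ^ 2) ^ (m + 1) / (2 * (m + 1)))
        (-(↑(m + 1) * (1 - x ^ 2) ^ m * -(2 * x)) / (2 * (m + 1))) x := by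
      simpa using (((hasDerivAt_pow 2 x).const_sub 1).pow (m + 1)).neg.div_const
        (2 * ((m : ℝ) + 1))
    convert h using 1
    push_cast
    field_simp
  rw [intervalIntegral.integral_eq_sub_of_hasDerivAt (fun x _ => hderiv x)
    (Continuous.intervalIntegrable (by fun_prop) a b)]
  ring

theorem const_mul_integral_le_integral_id_mul {f : ℝ → ℝ} {a b : ℝ} (hab : a ≤ b)
    (hf : ContinuousOn f (Icc a b)) (hf_nonneg : ∀ x ∈ Icc a b, 0 ≤ f x) :
    a * ∫ x in a..b, f x ≤ ∫ x in a..b, x * f x := by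
  have hf' : ContinuousOn f (uIcc a b) := by rwa [uIcc_of_le hab]
  rw [← intervalIntegral.integral_const_mul]
  refine intervalIntegral.integral_mono_on hab (hf'.const_smul a).intervalIntegrable
    ((continuousOn_id.mul hf').intervalIntegrable) fun x hx => ?_
  exact mul_le_mul_of_nonneg_right hx.1 (hf_nonneg x hx)

theorem one_add_mul_mul_one_sub_pow_le_one {t : ℝ} (ht₀ : -1 ≤ t) (ht₁ : t ≤ 1) (m : ℕ) :
    (1 + m * t) * (1 - t) ^ m ≤ 1 :=
  calc (1 + m * t) * (1 - t) ^ m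
      ≤ (1 + t) ^ m * (1 - t) ^ m :=
        mul_le_mul_of_nonneg_right (one_add_mul_le_pow (by linarith) m)
          (pow_nonneg (by linarith) m)
    _ = (1 - t ^ 2) ^ m := by rw [← mul_pow]; ring
    _ ≤ 1 := pow_le_one₀ (by nlinarith) (by nlinarith)

theorem sub_one_mul_one_add_mul_one_sub_sq_pow_le {a : ℝ} (ha : a ^ 2 ≤ 1) {m : ℕ}
    (hm : 1 ≤ m) : ((m : ℝ) - 1) * (1 + a) * (1 - a ^ 2) ^ m ≤ m + 1 := by
  have hm' : (1 : ℝ) ≤ m := by exact_mod_cast hm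
  have hquad : ((m : ℝ) - 1) * (1 + a) ≤ (m + 1) * (1 + m * a ^ 2) := by
    have hpos : (0 : ℝ) < 4 * m * (m + 1) := by positivity
    -- completing the square: `4m(m+1)` times the difference is a square plus `7m² + 10m - 1`
    have hsq : 0 ≤ 4 * m * (m + 1) * ((m + 1) * (1 + m * a ^ 2) - (m - 1) * (1 + a)) := by
      nlinarith [sq_nonneg (2 * m * (m + 1) * a - (m - 1))]
    nlinarith
  calc ((m : ℝ) - 1) * (1 + a) * (1 - a ^ 2) ^ m
      ≤ (m + 1) * (1 + m * a ^ 2) * (1 - a ^ 2) ^ m :=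
        mul_le_mul_of_nonneg_right hquad (pow_nonneg (by linarith) m)
    _ ≤ (m + 1) * 1 := by
        rw [mul_assoc]
        gcongr
        exact one_add_mul_mul_one_sub_pow_le_one (by nlinarith) ha m
    _ = m + 1 := mul_one _

/-- Bound on $(r-1)\int_{(r-1)/(r+1)}^1 (1-x^2)^m dx$ for $m \ge 3$. -/
theorem stmt_7 (m : ℕ) (hm : 3 ≤ m) (r : ℝ) (hr : 1 ≤ r) :
    (r - 1) * ∫ x in ((r - 1) / (r + 1))..(1 : ℝ), (1 - x ^ 2) ^ m
      ≤ 1 / ((m : ℝ) - 1) := by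
  set a := (r - 1) / (r + 1) with ha
  have hr₁ : 0 < r + 1 := by linarith
  have ha₀ : 0 ≤ a := div_nonneg (by linarith) hr₁.le
  have ha₁ : a < 1 := by rw [ha, div_lt_one hr₁]; linarith
  have hra : (r + 1) * (1 - a) = 2 := by rw [ha]; field_simp; ring
  have hm' : (3 : ℝ) ≤ m := by exact_mod_cast hm
  calc (r - 1) * ∫ x in a..1, (1 - x ^ 2) ^ m
      = (r + 1) * (a * ∫ x in a..1, (1 - x ^ 2) ^ m) := by rw [ha]; field_simp
    _ ≤ (r + 1) * ∫ x in a..1, x * (1 - x ^ 2) ^ m := by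
        gcongr
        exact const_mul_integral_le_integral_id_mul ha₁.le (by fun_prop)
          fun x hx => pow_nonneg (by nlinarith [hx.1, hx.2]) m
    _ = (1 + a) * (1 - a ^ 2) ^ m / (m + 1) := by
        rw [integral_mul_one_sub_sq_pow, one_pow, sub_self, zero_pow m.succ_ne_zero, sub_zero,
          pow_succ]
        field_simp
        linear_combination (1 + a) * (1 - a ^ 2) ^ m * hra
    _ ≤ 1 / ((m : ℝ) - 1) := by
        rw [div_le_div_iff₀ (by linarith) (by linarith), one_mul]
        linear_combination sub_one_mul_one_add_mul_one_sub_sq_pow_le (a := a) (by nlinarith)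
          (by omega : 1 ≤ m)
end

section
/- Let m ≥ 3 be a real number. Then for every t ∈ [0, 1/2], e^{−m t²} / (1 − t) ≤ m/(m − 1). -/
/-- Bound on $e^{-mt^2}/(1-t)$ on $[0,1/2]$ for real $m \ge 3$. -/
theorem stmt_9 (m : ℝ) (hm : 3 ≤ m) (t : ℝ) (ht0 : 0 ≤ t) (ht1 : t ≤ 1 / 2) :
    Real.exp (-m * t ^ 2) / (1 - t) ≤ m / (m - 1) := by
  have ht2 : (0:ℝ) < 1 - t := by linarith
  have hmt : 0 ≤ m * t ^ 2 := by positivity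
  have hexp : Real.exp (-m * t ^ 2) ≤ 1 / (1 + m * t ^ 2) := by
    rw [neg_mul, Real.exp_neg]
    have h1 : 1 + m * t ^ 2 ≤ Real.exp (m * t ^ 2) := by
      have := Real.add_one_le_exp (m * t ^ 2); linarith
    have h2 : 0 < 1 + m * t ^ 2 := by linarith
    rw [inv_eq_one_div]
    exact one_div_le_one_div_of_le h2 h1
  have h3 : Real.exp (-m * t ^ 2) / (1 - t) ≤ (1 / (1 + m * t ^ 2)) / (1 - t) :=
    by gcongr
  refine h3.trans ?_
  rw [div_div, div_le_div_iff₀ (by positivity) (by linarith)]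
  have key : m * t - (m * t) ^ 2 * (1 - t) ≤ 1 := by nlinarith [sq_nonneg (m * t - 1), sq_nonneg (m * t)]
  nlinarith [key, mul_nonneg (sq_nonneg (m*t)) ht0]
end

section
/- For every real ε ∈ [0,1], ((1+ε)/e^{ε})^{1/(1+ε)} ≤ exp(−ε²/7). -/
/-- Chernoff lower-tail base bound: $((1+\varepsilon)/e^\varepsilon)^{1/(1+\varepsilon)} \le e^{-\varepsilon^2/7}$. -/
theorem stmt_16 (ε : ℝ) (hε0 : 0 ≤ ε) (hε1 : ε ≤ 1) :
    ((1 + ε) / Real.exp ε) ^ (1 / (1 + ε)) ≤ Real.exp (-ε ^ 2 / 7) := by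
  have h1 : (0:ℝ) < 1 + ε := by linarith
  set g : ℝ := ε - ε ^ 2 * (1 + ε) / 7 with hg
  have ha : 0 ≤ ε - 2 * ε ^ 2 / 7 := by nlinarith
  have hge : ε - 2 * ε ^ 2 / 7 ≤ g := by rw [hg]; nlinarith
  have hgnn : 0 ≤ g := le_trans ha hge
  have hg2 : (ε - 2 * ε ^ 2 / 7) ^ 2 ≤ g ^ 2 := pow_le_pow_left₀ ha hge 2
  have hg3 : (ε - 2 * ε ^ 2 / 7) ^ 3 ≤ g ^ 3 := pow_le_pow_left₀ ha hge 3
  -- polynomial fact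
  have hpoly : ε ≤ (ε - 2 * ε ^ 2 / 7) + (ε - 2 * ε ^ 2 / 7) ^ 2 / 2
      + (ε - 2 * ε ^ 2 / 7) ^ 3 / 6 := by
    nlinarith [sq_nonneg ε, sq_nonneg (1 - ε), sq_nonneg (ε * (1 - ε)),
      mul_nonneg (mul_nonneg hε0 hε0) hε0,
      mul_nonneg (mul_nonneg (mul_nonneg hε0 hε0) hε0) hε0,
      mul_nonneg (mul_nonneg (mul_nonneg (mul_nonneg hε0 hε0) hε0) hε0) (sub_nonneg.2 hε1),
      mul_nonneg (mul_nonneg (mul_nonneg hε0 hε0) hε0) (sub_nonneg.2 hε1)]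
  -- cubic lower bound of exp
  have hcub : 1 + g + g ^ 2 / 2 + g ^ 3 / 6 ≤ Real.exp g := by
    have h := Real.sum_le_exp_of_nonneg hgnn 4
    simp [Finset.sum_range_succ, Nat.factorial] at h
    nlinarith [h]
  have hkey : Real.log (1 + ε) ≤ g := by
    rw [Real.log_le_iff_le_exp h1]
    refine le_trans ?_ hcub
    linarith
  have hpos : 0 < (1 + ε) / Real.exp ε := div_pos h1 (Real.exp_pos ε)
  rw [Real.rpow_def_of_pos hpos, Real.exp_le_exp,
    Real.log_div (ne_of_gt h1) (ne_of_gt (Real.exp_pos ε)), Real.log_exp,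
    mul_one_div, div_le_iff₀ h1]
  have he : -ε ^ 2 / 7 * (1 + ε) = g - ε := by rw [hg]; ring
  rw [he]
  linarith
end

section
/- Let λ > 0 and ε ∈ [0,1], and let X be a Poisson random variable with rate λ. Then P(X ≥ (1+ε)·λ) ≤ (e^{ε}/(1+ε)^{1+ε})^{λ} and P(X ≤ λ/(1+ε)) ≤ (((1+ε)/e^{ε})^{1/(1+ε)})^{λ}. -/
/-!
Chernoff's method: by Markov's inequality applied to `exp (t * X)`, both tails of `X` are
bounded by `exp (-t * a) * 𝔼[exp (t * X)]`, and the moment generating function of a Poisson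
variable of rate `λ` is `exp (λ * (exp t - 1))`. The choices `t = log (1 + ε)` for the upper tail
and `t = -log (1 + ε)` for the lower tail give the stated bounds.
-/

open MeasureTheory Real
open scoped NNReal Nat

namespace ProbabilityTheory

lemma hasSum_poissonPMFReal_mul_exp_mul (r : ℝ≥0) (t : ℝ) :
    HasSum (fun n : ℕ ↦ exp (-r) * r ^ n / n ! * exp (t * n)) (exp (r * (exp t - 1))) := by
  have h := (NormedSpace.expSeries_div_hasSum_exp ((r : ℝ) * exp t)).mul_left (exp (-r))
  rw [← exp_eq_exp_ℝ, ← exp_add] at h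
  have hterm : (fun n : ℕ ↦ exp (-r) * r ^ n / n ! * exp (t * n)) =
      fun n : ℕ ↦ exp (-r) * ((r * exp t) ^ n / n !) := by
    ext n
    rw [mul_comm t, exp_nat_mul, mul_pow]
    ring
  rwa [hterm, show (r : ℝ) * (exp t - 1) = -r + r * exp t by ring]

lemma integrable_exp_mul_poissonMeasure (r : ℝ≥0) (t : ℝ) :
    Integrable (fun n : ℕ ↦ exp (t * n)) (poissonMeasure r) := by
  rw [integrable_poissonMeasure_iff]
  simpa only [norm_of_nonneg (exp_pos _).le] using
    (hasSum_poissonPMFReal_mul_exp_mul r t).summable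

lemma integral_exp_mul_poissonMeasure (r : ℝ≥0) (t : ℝ) :
    ∫ n : ℕ, exp (t * n) ∂poissonMeasure r = exp (r * (exp t - 1)) := by
  rw [integral_poissonMeasure]
  exact (hasSum_poissonPMFReal_mul_exp_mul r t).tsum_eq

section RandomVariable

variable {Ω : Type*} [MeasurableSpace Ω] {P : Measure Ω} {X : Ω → ℕ} {r : ℝ≥0}

lemma integrable_exp_mul_of_map_eq_poissonMeasure (hX : P.map X = poissonMeasure r) (t : ℝ) :
    Integrable (fun ω ↦ exp (t * X ω)) P := by
  have hX_meas : AEMeasurable X P := aemeasurable_of_map_neZero (by rw [hX]; infer_instance)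
  have h := integrable_exp_mul_poissonMeasure r t
  rwa [← hX, integrable_map_measure .of_discrete hX_meas] at h

lemma mgf_of_map_eq_poissonMeasure (hX : P.map X = poissonMeasure r) (t : ℝ) :
    mgf (fun ω ↦ (X ω : ℝ)) P t = exp (r * (exp t - 1)) := by
  have hX_meas : AEMeasurable X P := aemeasurable_of_map_neZero (by rw [hX]; infer_instance)
  rw [← integral_exp_mul_poissonMeasure r t, ← hX, integral_map hX_meas .of_discrete]
  rfl

variable [IsFiniteMeasure P] {ε : ℝ}

lemma measureReal_ge_le_of_map_eq_poissonMeasure (hX : P.map X = poissonMeasure r)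
    (hε : 0 ≤ ε) :
    P.real {ω | (1 + ε) * r ≤ X ω} ≤ (exp ε / (1 + ε) ^ (1 + ε)) ^ (r : ℝ) := by
  have h1ε : 0 < 1 + ε := by linarith
  have hbase : exp ε / (1 + ε) ^ (1 + ε) = exp (ε - (1 + ε) * log (1 + ε)) := by
    rw [exp_sub, rpow_def_of_pos h1ε, mul_comm]
  have h := measure_ge_le_exp_mul_mgf ((1 + ε) * r) (log_nonneg (by linarith))
    (integrable_exp_mul_of_map_eq_poissonMeasure hX (log (1 + ε)))
  rw [mgf_of_map_eq_poissonMeasure hX, exp_log h1ε, ← exp_add] at h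
  rw [hbase, ← exp_mul]
  convert h using 2
  ring

lemma measureReal_le_le_of_map_eq_poissonMeasure (hX : P.map X = poissonMeasure r)
    (hε : 0 ≤ ε) :
    P.real {ω | X ω ≤ r / (1 + ε)} ≤ (((1 + ε) / exp ε) ^ (1 / (1 + ε))) ^ (r : ℝ) := by
  have h1ε : 0 < 1 + ε := by linarith
  have hbase : (1 + ε) / exp ε = exp (log (1 + ε) - ε) := by
    rw [exp_sub, exp_log h1ε]
  have h := measure_le_le_exp_mul_mgf (r / (1 + ε)) (neg_nonpos.mpr (log_nonneg (by linarith)))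
    (integrable_exp_mul_of_map_eq_poissonMeasure hX (-log (1 + ε)))
  rw [mgf_of_map_eq_poissonMeasure hX, exp_neg, exp_log h1ε, ← exp_add] at h
  rw [hbase, ← exp_mul, ← exp_mul]
  convert h using 2
  field_simp
  ring

end RandomVariable

end ProbabilityTheory

open MeasureTheory ProbabilityTheory in
theorem stmt_17_general (lam : NNReal) (ε : ℝ) (hε0 : 0 ≤ ε)
    {Ω : Type*} [MeasurableSpace Ω] (P : Measure Ω) [IsProbabilityMeasure P]
    (X : Ω → ℕ)
    (hd : P.map X = poissonMeasure lam) :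
    (P {ω | (1 + ε) * (lam : ℝ) ≤ (X ω : ℝ)}).toReal
        ≤ (Real.exp ε / (1 + ε) ^ (1 + ε)) ^ (lam : ℝ)
      ∧ (P {ω | (X ω : ℝ) ≤ (lam : ℝ) / (1 + ε)}).toReal
        ≤ (((1 + ε) / Real.exp ε) ^ (1 / (1 + ε))) ^ (lam : ℝ) :=
  ⟨measureReal_ge_le_of_map_eq_poissonMeasure hd hε0,
    measureReal_le_le_of_map_eq_poissonMeasure hd hε0⟩

open MeasureTheory ProbabilityTheory in
/-- Multiplicative Chernoff bounds for a Poisson random variable. -/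
theorem stmt_17 (lam : NNReal) (hlam : 0 < lam) (ε : ℝ) (hε0 : 0 ≤ ε) (hε1 : ε ≤ 1)
    {Ω : Type*} [MeasurableSpace Ω] (P : Measure Ω) [IsProbabilityMeasure P]
    (X : Ω → ℕ) (hX : Measurable X)
    (hd : P.map X = poissonMeasure lam) :
    (P {ω | (1 + ε) * (lam : ℝ) ≤ (X ω : ℝ)}).toReal
        ≤ (Real.exp ε / (1 + ε) ^ (1 + ε)) ^ (lam : ℝ)
      ∧ (P {ω | (X ω : ℝ) ≤ (lam : ℝ) / (1 + ε)}).toReal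
        ≤ (((1 + ε) / Real.exp ε) ^ (1 / (1 + ε))) ^ (lam : ℝ) :=
  stmt_17_general lam ε hε0 P X hd
end

section
/- Let g ≥ 1 be a natural number, let μ > 0, and let ε ∈ [0,1]. Let τ be a real random variable with the Gamma distribution with shape g and rate μ. Then P( τ < g/((1+ε)·μ) or τ > (1+ε)·g/μ ) ≤ 2·exp(−ε²·g/7). -/
open MeasureTheory Real Set ProbabilityTheory

lemma aux_L1 (ε : ℝ) (h0 : 0 ≤ ε) (h1 : ε ≤ 1) : 1 + ε ≤ exp (ε - ε^2/7) := by
  have hee : ε^2 ≤ ε := by nlinarith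
  have hy0 : 0 ≤ ε - ε^2/7 := by nlinarith
  have hy1 : |ε - ε^2/7| ≤ 1 := by rw [abs_of_nonneg hy0]; nlinarith
  have h := Real.exp_bound hy1 (n := 3) (by norm_num)
  rw [abs_of_nonneg hy0, abs_le] at h
  simp only [Finset.sum_range_succ, Finset.sum_range_zero, Nat.factorial] at h
  norm_num at h
  nlinarith [h.1, sq_nonneg ε, sq_nonneg (1-ε), sq_nonneg (ε - ε^2)]

lemma aux_L2 (ε : ℝ) (h0 : 0 ≤ ε) (h1 : ε ≤ 1) : exp (ε/(1+ε) + ε^2/7) ≤ 1 + ε := by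
  have hu : (0:ℝ) < 1 + ε := by linarith
  obtain ⟨z, hzdef⟩ : ∃ z, z = ε/(1+ε) + ε^2/7 := ⟨_, rfl⟩
  rw [← hzdef]
  have hz0 : 0 ≤ z := by rw [hzdef]; positivity
  have hzle : z ≤ 9/14 := by
    have h2 : ε/(1+ε) ≤ 1/2 := by rw [div_le_iff₀ hu]; nlinarith
    have h3 : ε^2/7 ≤ 1/7 := by nlinarith
    rw [hzdef]; linarith
  have hz1 : |z| ≤ 1 := by rw [abs_of_nonneg hz0]; linarith
  have h := Real.exp_bound hz1 (n := 3) (by norm_num)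
  rw [abs_of_nonneg hz0, abs_le] at h
  simp only [Finset.sum_range_succ, Finset.sum_range_zero, Nat.factorial] at h
  norm_num at h
  have hz : z*(7*(1+ε)) = 7*ε + ε^2*(1+ε) := by
    rw [hzdef]; field_simp
  have key : z + z^2/2 + 2/9*z^3 ≤ ε := by
    nlinarith [hz, sq_nonneg z, sq_nonneg (z-ε), mul_nonneg hz0 hz0,
      mul_nonneg (mul_nonneg hz0 hz0) hz0, sq_nonneg (1-ε), mul_nonneg h0 h0,
      mul_nonneg (mul_nonneg h0 h0) h0, mul_nonneg hz0 h0]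
  nlinarith [h.2]

lemma aux_shift {a r c : ℝ} (hr : 0 < r) (hc : 0 < c) (x : ℝ) :
    ENNReal.ofReal (exp ((r - c) * x)) * gammaPDF a r x
      = ENNReal.ofReal ((r / c) ^ a) * gammaPDF a c x := by
  rcases lt_or_ge x 0 with hx | hx
  · rw [gammaPDF_of_neg hx, gammaPDF_of_neg hx, mul_zero, mul_zero]
  · rw [gammaPDF_of_nonneg hx, gammaPDF_of_nonneg hx,
      ← ENNReal.ofReal_mul (exp_pos _).le,
      ← ENNReal.ofReal_mul (by positivity)]
    congr 1
    have hexp : exp ((r-c)*x) * exp (-(r*x)) = exp (-(c*x)) := by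
      rw [← Real.exp_add]; ring_nf
    have hrc : (r / c) ^ a * c ^ a = r ^ a := by
      rw [← Real.mul_rpow (by positivity) hc.le, div_mul_cancel₀ _ hc.ne']
    rw [show exp ((r-c)*x) * (r^a/Gamma a * x^(a-1) * exp (-(r*x)))
        = r^a/Gamma a * x^(a-1) * (exp ((r-c)*x) * exp (-(r*x))) from by ring, hexp, ← hrc]
    ring

lemma aux_tail {a r c q : ℝ} (ha : 0 < a) (hr : 0 < r) (hc : 0 < c)
    {S : Set ℝ} (hS : MeasurableSet S) (hq : ∀ x ∈ S, 0 ≤ (r - c) * (x - q)) :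
    gammaMeasure a r S ≤ ENNReal.ofReal (exp (-((r - c) * q)) * (r / c) ^ a) := by
  have hm : Measurable fun x => ENNReal.ofReal (exp ((r - c) * x)) * gammaPDF a r x := by
    exact ((measurable_const.mul measurable_id').exp.ennreal_ofReal).mul
      (measurable_gammaPDFReal a r).ennreal_ofReal
  calc gammaMeasure a r S = ∫⁻ x in S, gammaPDF a r x := withDensity_apply _ hS
    _ ≤ ∫⁻ x in S, ENNReal.ofReal (exp ((r - c) * (x - q))) * gammaPDF a r x := by
        refine setLIntegral_mono' hS fun x hx => ?_
        conv_lhs => rw [← one_mul (gammaPDF a r x)]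
        gcongr
        exact ENNReal.one_le_ofReal.mpr (Real.one_le_exp (hq x hx))
    _ ≤ ∫⁻ x, ENNReal.ofReal (exp ((r - c) * (x - q))) * gammaPDF a r x :=
        setLIntegral_le_lintegral _ _
    _ = ∫⁻ x, ENNReal.ofReal (exp (-((r-c)*q))) *
          (ENNReal.ofReal (exp ((r - c) * x)) * gammaPDF a r x) := by
        congr 1; funext x
        rw [← mul_assoc, ← ENNReal.ofReal_mul (exp_pos _).le, ← Real.exp_add]
        ring_nf
    _ = ENNReal.ofReal (exp (-((r-c)*q))) *
          ∫⁻ x, ENNReal.ofReal (exp ((r - c) * x)) * gammaPDF a r x :=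
        lintegral_const_mul _ hm
    _ = ENNReal.ofReal (exp (-((r-c)*q))) *
          ∫⁻ x, ENNReal.ofReal ((r/c)^a) * gammaPDF a c x := by
        congr 1
        exact lintegral_congr fun x => aux_shift hr hc x
    _ = ENNReal.ofReal (exp (-((r-c)*q)) * (r/c)^a) := by
        have hgm : Measurable (gammaPDF a c) := by
          unfold gammaPDF; exact (measurable_gammaPDFReal a c).ennreal_ofReal
        rw [lintegral_const_mul _ hgm, lintegral_gammaPDF_eq_one ha hc, mul_one,
          ← ENNReal.ofReal_mul (exp_pos _).le]
open MeasureTheory ProbabilityTheory in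
/-- Concentration of the Gamma-distributed time at which the $g$-th jump of a
Poisson process of rate $\mu$ occurs. -/
theorem stmt_18 (g : ℕ) (hg : 1 ≤ g) (μ : ℝ) (hμ : 0 < μ) (ε : ℝ)
    (hε0 : 0 ≤ ε) (hε1 : ε ≤ 1)
    {Ω : Type*} [MeasurableSpace Ω] (P : Measure Ω) [IsProbabilityMeasure P]
    (τ : Ω → ℝ) (hτ : Measurable τ)
    (hd : P.map τ = gammaMeasure (g : ℝ) μ) :
    (P {ω | τ ω < (g : ℝ) / ((1 + ε) * μ) ∨ (1 + ε) * (g : ℝ) / μ < τ ω}).toReal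
      ≤ 2 * Real.exp (-ε ^ 2 * g / 7) := by
  have h1 : (0:ℝ) < 1 + ε := by linarith
  have hga : (0:ℝ) < (g:ℝ) := by exact_mod_cast hg
  set b := (g:ℝ) / ((1+ε)*μ) with hbdef
  set aa := (1+ε)*(g:ℝ)/μ with haadef
  have hset : {ω | τ ω < b ∨ aa < τ ω} = τ ⁻¹' (Iio b ∪ Ioi aa) := by
    ext ω; simp [Set.mem_union]
  rw [hset, ← Measure.map_apply hτ (measurableSet_Iio.union measurableSet_Ioi), hd]
  -- lower tail bound
  have hb1 : gammaMeasure (g:ℝ) μ (Iio b) ≤ ENNReal.ofReal (exp (-ε^2*g/7)) := by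
    refine le_trans (aux_tail (q := b) hga hμ (by positivity : (0:ℝ) < (1+ε)*μ)
      measurableSet_Iio fun x hx => ?_) ?_
    · have hx' : x - b ≤ 0 := by simp only [Set.mem_Iio] at hx; linarith
      have : μ - (1+ε)*μ ≤ 0 := by nlinarith
      nlinarith [mul_nonneg (neg_nonneg.mpr this) (neg_nonneg.mpr hx')]
    · refine ENNReal.ofReal_le_ofReal ?_
      have harg : -((μ - (1+ε)*μ) * b) = ε*(g:ℝ)/(1+ε) := by
        rw [hbdef]; field_simp; ring
      have hratio : μ/((1+ε)*μ) = 1/(1+ε) := by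
        rw [mul_comm, ← div_div, div_self hμ.ne']
      rw [harg, hratio, div_rpow zero_le_one h1.le, one_rpow, mul_one_div,
        div_le_iff₀ (rpow_pos_of_pos h1 _)]
      have h2 := aux_L2 ε hε0 hε1
      have h3 : exp ((ε/(1+ε) + ε^2/7) * (g:ℝ)) ≤ (1+ε) ^ (g:ℝ) := by
        rw [exp_mul]
        exact rpow_le_rpow (exp_pos _).le h2 hga.le
      calc exp (ε*(g:ℝ)/(1+ε))
          = exp (-ε^2*(g:ℝ)/7) * exp ((ε/(1+ε) + ε^2/7) * (g:ℝ)) := by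
            rw [← Real.exp_add]; congr 1; field_simp; ring
        _ ≤ exp (-ε^2*(g:ℝ)/7) * (1+ε) ^ (g:ℝ) := by
            exact mul_le_mul_of_nonneg_left h3 (exp_pos _).le
  -- upper tail bound
  have hb2 : gammaMeasure (g:ℝ) μ (Ioi aa) ≤ ENNReal.ofReal (exp (-ε^2*g/7)) := by
    refine le_trans (aux_tail (q := aa) hga hμ (by positivity : (0:ℝ) < μ/(1+ε))
      measurableSet_Ioi fun x hx => ?_) ?_
    · have hx' : 0 ≤ x - aa := by simp only [Set.mem_Ioi] at hx; linarith
      have hc' : 0 ≤ μ - μ/(1+ε) := by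
        have : μ/(1+ε) ≤ μ := div_le_self hμ.le (by linarith)
        linarith
      exact mul_nonneg hc' hx'
    · refine ENNReal.ofReal_le_ofReal ?_
      have harg : -((μ - μ/(1+ε)) * aa) = -(ε*(g:ℝ)) := by
        rw [haadef]; field_simp; ring
      have hratio : μ/(μ/(1+ε)) = 1+ε := by
        rw [div_div_eq_mul_div, mul_comm, mul_div_assoc, div_self hμ.ne', mul_one]
      rw [harg, hratio]
      have h2 := aux_L1 ε hε0 hε1
      have h3 : (1+ε) ^ (g:ℝ) ≤ exp ((ε - ε^2/7) * (g:ℝ)) := by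
        rw [exp_mul]
        exact rpow_le_rpow h1.le h2 hga.le
      calc exp (-(ε*(g:ℝ))) * (1+ε) ^ (g:ℝ)
          ≤ exp (-(ε*(g:ℝ))) * exp ((ε - ε^2/7) * (g:ℝ)) :=
            mul_le_mul_of_nonneg_left h3 (exp_pos _).le
        _ = exp (-ε^2*(g:ℝ)/7) := by rw [← Real.exp_add]; congr 1; ring
  refine ENNReal.toReal_le_of_le_ofReal (by positivity) ?_
  refine le_trans (measure_union_le _ _) ?_
  rw [show (2:ℝ) * exp (-ε^2*(g:ℝ)/7) = exp (-ε^2*(g:ℝ)/7) + exp (-ε^2*(g:ℝ)/7) by ring,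
    ENNReal.ofReal_add (exp_pos _).le (exp_pos _).le]
  exact add_le_add hb1 hb2
end
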